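/- arXiv:2505.09654 — 7 statements merged into one kernel-verified Lean document; each statement's English description precedes it below -/
import Mathlib

section
/- Let α be a complex number with |α| < 1 and let C : ℕ → ℂ satisfy the single-mode squeezing recurrence (C 1 = 0 and √(n+1) · C (n+1) = α · √n · C (n-1) for all n ≥ 1), together with the normalization Σₙ |C n|² = 1 and the phase convention that C 0 is a positive real number. Then C is uniquely determined: C (2n) = (1 − |α|²)^(1/4) · α^n · √((2n-1)‼/(2n)‼) and C (2n+1) = 0 for all n ≥ 0. -/
/-! The recurrence ties `C (n + 1)` to `C (n - 1)`, so `C 1 = 0` kills every odd coefficient and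
the even ones are forced to be `C (2n) = C 0 · αⁿ · √((2n-1)‼/(2n)‼)`. The ratio
`(2n-1)‼/(2n)‼ = multichoose (1/2) n` is the `n`-th Taylor coefficient of `(1 - t)^(-1/2)`, so the
normalization becomes `|C 0|² / √(1 - |α|²) = 1`, and the phase convention leaves only
`C 0 = (1 - |α|²)^(1/4)`. -/

open Nat

lemma ascPochhammer_eval_half_mul_two_pow (n : ℕ) :
    (ascPochhammer ℝ n).eval (1 / 2) * 2 ^ n = ((2 * n - 1)‼ : ℝ) := by
  induction n with
  | zero => simp
  | succ n ih =>
    rw [ascPochhammer_succ_eval, show 2 * (n + 1) - 1 = 2 * n + 1 by omega,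
      Nat.doubleFactorial_add_one, Nat.cast_mul, ← ih]
    push_cast
    ring

lemma Ring.multichoose_half (n : ℕ) :
    Ring.multichoose (1 / 2 : ℝ) n = ((2 * n - 1)‼ : ℝ) / (2 * n)‼ := by
  have h := Ring.factorial_nsmul_multichoose_eq_ascPochhammer (1 / 2 : ℝ) n
  rw [Polynomial.ascPochhammer_smeval_eq_eval, nsmul_eq_mul] at h
  rw [Nat.doubleFactorial_two_mul, ← ascPochhammer_eval_half_mul_two_pow, ← h]
  push_cast
  field_simp

lemma hasSum_doubleFactorial_div_mul_pow {t : ℝ} (ht : |t| < 1) :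
    HasSum (fun n : ℕ => ((2 * n - 1)‼ : ℝ) / (2 * n)‼ * t ^ n) (1 / √(1 - t)) := by
  have h := (Real.one_div_one_sub_rpow_hasFPowerSeriesOnBall_zero (1 / 2)).hasSum
    (y := t) (by simpa [enorm_eq_nnnorm, ← NNReal.coe_lt_coe] using ht)
  simp only [FormalMultilinearSeries.ofScalars_apply_eq, ← Ring.multichoose_eq,
    Ring.multichoose_half, smul_eq_mul, zero_add] at h
  rwa [Real.sqrt_eq_rpow]

lemma doubleFactorial_div_succ_mul (n : ℕ) :
    (2 * n + 2 : ℝ) * ((2 * (n + 1) - 1)‼ / (2 * (n + 1))‼) =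
      (2 * n + 1) * ((2 * n - 1)‼ / (2 * n)‼) := by
  rw [show 2 * (n + 1) - 1 = 2 * n + 1 by omega, show 2 * (n + 1) = 2 * n + 2 by ring,
    Nat.doubleFactorial_add_one, Nat.doubleFactorial_add_two]
  have : ((2 * n)‼ : ℝ) ≠ 0 := by positivity
  push_cast
  field_simp

lemma hasSum_comp_two_mul_iff_of_odd_eq_zero {M : Type*} [AddCommMonoid M] [TopologicalSpace M]
    {f : ℕ → M} {a : M} (hodd : ∀ n, f (2 * n + 1) = 0) :
    HasSum (fun n => f (2 * n)) a ↔ HasSum f a := by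
  refine Function.Injective.hasSum_iff (f := f) (fun m n h => by omega) ?_
  intro m hm
  obtain ⟨k, rfl⟩ := (Nat.even_or_odd m).resolve_left fun ⟨k, hk⟩ => hm ⟨k, by omega⟩
  exact hodd k

lemma squeezing_coeff_odd_eq_zero {α : ℂ} {C : ℕ → ℂ} (h1 : C 1 = 0)
    (hrec : ∀ n : ℕ, 1 ≤ n →
      (Real.sqrt (n + 1) : ℂ) * C (n + 1) = α * (Real.sqrt n : ℂ) * C (n - 1))
    (n : ℕ) : C (2 * n + 1) = 0 := by
  induction n with
  | zero => exact h1
  | succ n ih =>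
    have h := hrec (2 * n + 2) (by omega)
    rw [show 2 * n + 2 - 1 = 2 * n + 1 by omega, ih, mul_zero] at h
    have hne : (Real.sqrt ((2 * n + 2 : ℕ) + 1) : ℂ) ≠ 0 := by
      exact_mod_cast (Real.sqrt_pos.mpr (by positivity)).ne'
    exact (mul_eq_zero.mp h).resolve_left hne

lemma squeezing_coeff_even_eq {α : ℂ} {C : ℕ → ℂ}
    (hrec : ∀ n : ℕ, 1 ≤ n →
      (Real.sqrt (n + 1) : ℂ) * C (n + 1) = α * (Real.sqrt n : ℂ) * C (n - 1))
    (n : ℕ) : C (2 * n) = C 0 * α ^ n * (√(((2 * n - 1)‼ : ℝ) / (2 * n)‼) : ℂ) := by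
  induction n with
  | zero => simp
  | succ n ih =>
    have h := hrec (2 * n + 1) (by omega)
    rw [show 2 * n + 1 - 1 = 2 * n by omega, ih] at h
    have hsqrt : √(2 * n + 2 : ℝ) * √(((2 * (n + 1) - 1)‼ : ℝ) / (2 * (n + 1))‼) =
        √(2 * n + 1 : ℝ) * √(((2 * n - 1)‼ : ℝ) / (2 * n)‼) := by
      rw [← Real.sqrt_mul (by positivity), ← Real.sqrt_mul (by positivity),
        doubleFactorial_div_succ_mul]
    have hne : (√(2 * n + 2 : ℝ) : ℂ) ≠ 0 := by
      exact_mod_cast (Real.sqrt_pos.mpr (by positivity)).ne'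
    apply mul_left_cancel₀ hne
    have hsqrtC := congrArg Complex.ofReal hsqrt
    push_cast at h hsqrtC ⊢
    rw [show 2 * n + 1 + 1 = 2 * (n + 1) by ring, show (2 * n + 1 + 1 : ℝ) = 2 * n + 2 by ring]
      at h
    rw [h]
    linear_combination -(C 0 * α ^ (n + 1)) * hsqrtC

/-- Uniqueness of the normalized single-mode squeezed vacuum: the recurrence,
normalization, and phase convention determine
`C (2n) = (1-|α|²)^(1/4) αⁿ √((2n-1)‼/(2n)‼)` and `C (2n+1) = 0`. -/
theorem squeezed_vacuum_unique (α : ℂ) (hα : ‖α‖ < 1) (C : ℕ → ℂ)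
    (h1 : C 1 = 0)
    (hrec : ∀ n : ℕ, 1 ≤ n →
      (Real.sqrt (n + 1) : ℂ) * C (n + 1) = α * (Real.sqrt n : ℂ) * C (n - 1))
    (hnorm : HasSum (fun n : ℕ => ‖C n‖ ^ 2) 1)
    (hphase : ∃ r : ℝ, 0 < r ∧ C 0 = (r : ℂ)) :
    (∀ n : ℕ, C (2 * n) =
      (((1 - ‖α‖ ^ 2) ^ ((1 : ℝ) / 4) : ℝ) : ℂ) * α ^ n *
        (Real.sqrt ((Nat.doubleFactorial (2 * n - 1) : ℝ) /
          (Nat.doubleFactorial (2 * n) : ℝ)) : ℂ)) ∧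
    (∀ n : ℕ, C (2 * n + 1) = 0) := by
  obtain ⟨r, hr, hC0⟩ := hphase
  have hodd := squeezing_coeff_odd_eq_zero h1 hrec
  have heven := squeezing_coeff_even_eq hrec
  have hα2 : 0 < 1 - ‖α‖ ^ 2 := by nlinarith [norm_nonneg α]
  have hsum : HasSum (fun n : ℕ => r ^ 2 * ((2 * n - 1)‼ / (2 * n)‼ * (‖α‖ ^ 2) ^ n)) 1 := by
    rw [← hasSum_comp_two_mul_iff_of_odd_eq_zero (by simp [hodd])] at hnorm
    convert hnorm using 2 with n
    rw [heven, hC0, norm_mul, norm_mul, Complex.norm_real, Complex.norm_real, norm_pow,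
      Real.norm_of_nonneg hr.le, Real.norm_of_nonneg (Real.sqrt_nonneg _), mul_pow, mul_pow,
      Real.sq_sqrt (by positivity), ← pow_mul, ← pow_mul]
    ring
  have hr2 : r ^ 2 = √(1 - ‖α‖ ^ 2) := by
    have ht : |‖α‖ ^ 2| < 1 := by rw [abs_of_nonneg (by positivity)]; linarith
    have h := ((hasSum_doubleFactorial_div_mul_pow ht).mul_left (r ^ 2)).unique hsum
    have : 0 < √(1 - ‖α‖ ^ 2) := Real.sqrt_pos.mpr hα2
    field_simp at h
    linarith
  have hr_eq : (1 - ‖α‖ ^ 2) ^ ((1 : ℝ) / 4) = r := by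
    have hr_pow_four : 1 - ‖α‖ ^ 2 = r ^ 4 := by
      rw [show r ^ 4 = (r ^ 2) ^ 2 by ring, hr2, Real.sq_sqrt hα2.le]
    rw [hr_pow_four, one_div, ← Real.rpow_natCast, ← Real.rpow_mul hr.le]
    norm_num
  exact ⟨fun n => by rw [heven, hC0, hr_eq], hodd⟩
end

section
/- Let α be a complex number with |α| ≥ 1 and let C : ℕ → ℂ satisfy the single-mode squeezing recurrence (C 1 = 0 and √(n+1) · C (n+1) = α · √n · C (n-1) for all n ≥ 1). If Σₙ |C n|² < ∞ (square-summability), then C n = 0 for every n. Equivalently, a nonzero normalizable solution of the annihilation condition (a − α a†)|ψ⟩ = 0 exists only if |α| < 1. -/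
/-!
Taking squared norms turns the recurrence into `(n + 1) ‖C (n + 1)‖² = ‖α‖² n ‖C (n - 1)‖²`, so
for `‖α‖ ≥ 1` the quantity `(2k + 1) ‖C (2k)‖²` is nondecreasing in `k`. Hence
`‖C (2k)‖² ≥ ‖C 0‖² / (2k + 1)`, and square-summability forces `C 0 = 0` by divergence of the
harmonic series. Since `C 0 = C 1 = 0` and the recurrence determines `C (n + 2)` from `C n`,
every coefficient vanishes.
-/

open Real

theorem nonpos_of_summable_of_monotone_mul {u w : ℕ → ℝ} (hu : Summable u)
    (hw : ∀ k, 0 < w k) (hmono : Monotone fun k => w k * u k)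
    (hdiv : ¬Summable fun k => 1 / w k) : u 0 ≤ 0 := by
  by_contra! hu0
  have hlower : ∀ k, w 0 * u 0 * (1 / w k) ≤ u k := fun k => by
    rw [mul_one_div, div_le_iff₀' (hw k)]
    exact hmono (Nat.zero_le k)
  have hc : 0 < w 0 * u 0 := mul_pos (hw 0) hu0
  refine hdiv ((summable_mul_left_iff hc.ne').mp ?_)
  exact hu.of_nonneg_of_le (fun k => by have := hw k; positivity) hlower

theorem not_summable_one_div_two_mul_add_one : ¬Summable fun k : ℕ => 1 / (2 * (k : ℝ) + 1) := by
  intro h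
  have hsucc : Summable fun k : ℕ => 1 / ((k + 1 : ℕ) : ℝ) := by
    refine (h.mul_left 2).of_nonneg_of_le (fun k => by positivity) fun k => ?_
    push_cast
    rw [mul_one_div, div_le_div_iff₀ (by positivity) (by positivity)]
    linarith
  exact not_summable_one_div_natCast ((summable_nat_add_iff 1).mp hsucc)

section Recurrence

variable {α : ℂ} {C : ℕ → ℂ}
  (hrec : ∀ n : ℕ, 1 ≤ n →
    (Real.sqrt (n + 1) : ℂ) * C (n + 1) = α * (Real.sqrt n : ℂ) * C (n - 1))
include hrec

theorem norm_sq_recurrence {n : ℕ} (hn : 1 ≤ n) :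
    ((n : ℝ) + 1) * ‖C (n + 1)‖ ^ 2 = ‖α‖ ^ 2 * n * ‖C (n - 1)‖ ^ 2 := by
  have h := congrArg (fun z => ‖z‖ ^ 2) (hrec n hn)
  simpa only [norm_mul, Complex.norm_real, norm_eq_abs, mul_pow, sq_abs,
    sq_sqrt (by positivity : (0 : ℝ) ≤ n + 1), sq_sqrt (Nat.cast_nonneg n)] using h

theorem monotone_mul_norm_sq_even (hα : 1 ≤ ‖α‖) :
    Monotone fun k : ℕ => (2 * (k : ℝ) + 1) * ‖C (2 * k)‖ ^ 2 := by
  refine monotone_nat_of_le_succ fun k => ?_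
  have h := norm_sq_recurrence hrec (n := 2 * k + 1) (by omega)
  rw [show 2 * k + 1 + 1 = 2 * (k + 1) by ring, Nat.add_sub_cancel] at h
  push_cast at h ⊢
  have hα2 : 1 ≤ ‖α‖ ^ 2 := one_le_pow₀ hα
  calc (2 * (k : ℝ) + 1) * ‖C (2 * k)‖ ^ 2
      ≤ ‖α‖ ^ 2 * (2 * k + 1) * ‖C (2 * k)‖ ^ 2 := by
        rw [mul_assoc]; exact le_mul_of_one_le_left (by positivity) hα2
    _ = (2 * k + 1 + 1) * ‖C (2 * (k + 1))‖ ^ 2 := h.symm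
    _ ≤ (2 * (k + 1) + 1) * ‖C (2 * (k + 1))‖ ^ 2 := by gcongr; linarith

theorem eq_zero_add_two_of_eq_zero {n : ℕ} (hn : C n = 0) : C (n + 2) = 0 := by
  have h := hrec (n + 1) (by omega)
  rw [Nat.add_sub_cancel, hn, mul_zero] at h
  have hsqrt : (Real.sqrt ((n + 1 : ℕ) + 1) : ℂ) ≠ 0 :=
    Complex.ofReal_ne_zero.mpr (Real.sqrt_pos.mpr (by positivity)).ne'
  exact (mul_eq_zero.mp h).resolve_left hsqrt

end Recurrence

/-- A nonzero normalizable solution of the single-mode annihilation condition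
exists only for `|α| < 1`: if `|α| ≥ 1` and `Σₙ |C n|²` converges, then `C ≡ 0`. -/
theorem single_mode_no_normalizable_solution (α : ℂ) (hα : 1 ≤ ‖α‖) (C : ℕ → ℂ)
    (h1 : C 1 = 0)
    (hrec : ∀ n : ℕ, 1 ≤ n →
      (Real.sqrt (n + 1) : ℂ) * C (n + 1) = α * (Real.sqrt n : ℂ) * C (n - 1))
    (hsum : Summable (fun n : ℕ => ‖C n‖ ^ 2)) :
    ∀ n : ℕ, C n = 0 := by
  have hsum_even : Summable fun k : ℕ => ‖C (2 * k)‖ ^ 2 :=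
    hsum.comp_injective fun a b hab => by omega
  have h0 : ‖C 0‖ ^ 2 ≤ 0 :=
    nonpos_of_summable_of_monotone_mul hsum_even (fun k => by positivity)
      (monotone_mul_norm_sq_even hrec hα) not_summable_one_div_two_mul_add_one
  have hC0 : C 0 = 0 := by simpa using h0
  intro n
  induction n using Nat.twoStepInduction with
  | zero => exact hC0
  | one => exact h1
  | more n hn _ => exact eq_zero_add_two_of_eq_zero hrec hn
end

section
/- Let α be a complex number with |α| < 1 and let C : ℕ → ℂ be the normalized single-mode squeezed vacuum coefficients, C (2n) = (1 − |α|²)^(1/4) · α^n · √((2n-1)‼/(2n)‼) and C (2n+1) = 0. Then the mean particle number Σₙ n · |C n|² converges and equals |α|² / (1 − |α|²). -/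
/-!
With `t = ‖α‖²`, the even terms are `2n ‖C (2n)‖² = √(1 - t) · 2n rₙ tⁿ`, where
`rₙ = (2n-1)‼/(2n)‼ = multichoose (1/2) n` is the `n`-th coefficient of the binomial series of
`(1 - t)^(-1/2)`. Since `(2n + 1) rₙ = multichoose (3/2) n` is the coefficient of
`(1 - t)^(-3/2)`, we get `∑ 2n rₙ tⁿ = (1 - t)^(-3/2) - (1 - t)^(-1/2) = t (1 - t)^(-3/2)`,
and the factor `√(1 - t)` turns this into `t / (1 - t)`.
-/

open scoped Nat
open Polynomial

theorem two_pow_mul_ascPochhammer_eval_half {K : Type*} [Field K] [CharZero K] (n : ℕ) :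
    2 ^ n * (ascPochhammer K n).eval (1 / 2) = (2 * n - 1)‼ := by
  induction n with
  | zero => simp
  | succ n ih =>
    rw [ascPochhammer_succ_eval, show 2 * (n + 1) - 1 = 2 * n + 1 by omega,
      Nat.doubleFactorial_add_one, pow_succ]
    push_cast
    rw [← ih]
    ring

namespace Ring

variable {K : Type*} [Field K] [CharZero K]

theorem multichoose_eq_ascPochhammer_eval_div (a : K) (n : ℕ) :
    multichoose a n = (ascPochhammer K n).eval a / n ! := by
  rw [eq_div_iff (Nat.cast_ne_zero.mpr n.factorial_ne_zero), mul_comm, ← nsmul_eq_mul,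
    factorial_nsmul_multichoose_eq_ascPochhammer, ascPochhammer_smeval_eq_eval]

theorem mul_multichoose_add_one (a : K) (n : ℕ) :
    a * multichoose (a + 1) n = (a + n) * multichoose a n := by
  have hsucc := ascPochhammer_succ_eval n a
  rw [ascPochhammer_succ_left, eval_mul, eval_X, eval_comp, eval_add, eval_X, eval_one] at hsucc
  rw [multichoose_eq_ascPochhammer_eval_div, multichoose_eq_ascPochhammer_eval_div,
    ← mul_div_assoc, ← mul_div_assoc, hsucc, mul_comm]

theorem multichoose_half_s6 (n : ℕ) :
    multichoose (1 / 2 : K) n = (2 * n - 1)‼ / (2 * n)‼ := by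
  rw [multichoose_eq_ascPochhammer_eval_div, ← two_pow_mul_ascPochhammer_eval_half,
    Nat.doubleFactorial_two_mul]
  push_cast
  rw [mul_div_mul_left _ _ (pow_ne_zero n two_ne_zero)]

end Ring

namespace Real

open Ring

theorem hasSum_multichoose_mul_pow (a : ℝ) {x : ℝ} (hx : |x| < 1) :
    HasSum (fun n ↦ multichoose a n * x ^ n) (1 / (1 - x) ^ a) := by
  have hx' : x ∈ Metric.eball (0 : ℝ) 1 := by
    simpa [enorm_eq_nnnorm, ← NNReal.coe_lt_one] using hx
  have hcoeff : (fun n : ℕ ↦ multichoose a n * x ^ n) =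
      fun n : ℕ ↦ Ring.choose (a + (n : ℝ) - 1) n * x ^ n := by
    ext n
    rw [Ring.multichoose_eq]
  rw [hcoeff]
  simpa [FormalMultilinearSeries.ofScalars_apply_eq, mul_comm] using
    (one_div_one_sub_rpow_hasFPowerSeriesOnBall_zero a).hasSum hx'

theorem hasSum_two_mul_multichoose_half_mul_pow {x : ℝ} (hx : |x| < 1) :
    HasSum (fun n : ℕ ↦ 2 * n * multichoose (1 / 2 : ℝ) n * x ^ n)
      (x / (1 - x) ^ (3 / 2 : ℝ)) := by
  have hpos : 0 < 1 - x := by linarith [le_abs_self x]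
  have hcoeff (n : ℕ) :
      2 * n * multichoose (1 / 2 : ℝ) n = multichoose (3 / 2) n - multichoose (1 / 2) n := by
    have := mul_multichoose_add_one (1 / 2 : ℝ) n
    norm_num at this ⊢
    linarith
  have hvalue : 1 / (1 - x) ^ (3 / 2 : ℝ) - 1 / (1 - x) ^ (1 / 2 : ℝ) =
      x / (1 - x) ^ (3 / 2 : ℝ) := by
    rw [show (3 / 2 : ℝ) = 1 + 1 / 2 by norm_num, rpow_add hpos, rpow_one]
    field_simp
    ring
  simpa only [hcoeff, sub_mul, hvalue] using
    (hasSum_multichoose_mul_pow (3 / 2) hx).sub (hasSum_multichoose_mul_pow (1 / 2) hx)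

end Real

/-- Mean particle number of the normalized single-mode squeezed vacuum:
`Σₙ n |C n|² = |α|² / (1 - |α|²)`. -/
theorem squeezed_vacuum_mean_particle_number (α : ℂ) (hα : ‖α‖ < 1) (C : ℕ → ℂ)
    (hEven : ∀ n : ℕ, C (2 * n) =
      (((1 - ‖α‖ ^ 2) ^ ((1 : ℝ) / 4) : ℝ) : ℂ) * α ^ n *
        (Real.sqrt ((Nat.doubleFactorial (2 * n - 1) : ℝ) /
          (Nat.doubleFactorial (2 * n) : ℝ)) : ℂ))
    (hOdd : ∀ n : ℕ, C (2 * n + 1) = 0) :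
    HasSum (fun n : ℕ => (n : ℝ) * ‖C n‖ ^ 2)
      (‖α‖ ^ 2 / (1 - ‖α‖ ^ 2)) := by
  set t := ‖α‖ ^ 2
  have ht : |t| < 1 := by
    rw [abs_of_nonneg (by positivity)]
    nlinarith [norm_nonneg α]
  have hpos : 0 < 1 - t := by linarith [le_abs_self t]
  have hterm (n : ℕ) : ((2 * n : ℕ) : ℝ) * ‖C (2 * n)‖ ^ 2 =
      (1 - t) ^ (1 / 2 : ℝ) * (2 * n * Ring.multichoose (1 / 2 : ℝ) n * t ^ n) := by
    rw [hEven, norm_mul, norm_mul, Complex.norm_real, Complex.norm_real, norm_pow,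
      Real.norm_of_nonneg (Real.rpow_nonneg hpos.le _), Real.norm_of_nonneg (Real.sqrt_nonneg _),
      mul_pow, mul_pow, Real.sq_sqrt (by positivity), ← Real.rpow_mul_natCast hpos.le,
      ← Ring.multichoose_half_s6]
    have hquarter : (1 / 4 : ℝ) * (2 : ℕ) = 1 / 2 := by norm_num
    have hpow : (‖α‖ ^ n) ^ 2 = t ^ n := by rw [← pow_mul, mul_comm, pow_mul]
    rw [hquarter, hpow]
    push_cast
    ring
  have hvalue : (1 - t) ^ (1 / 2 : ℝ) * (t / (1 - t) ^ (3 / 2 : ℝ)) = t / (1 - t) := by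
    rw [show (3 / 2 : ℝ) = 1 + 1 / 2 by norm_num, Real.rpow_add hpos, Real.rpow_one]
    field_simp
  have heven : HasSum (fun n : ℕ ↦ ((2 * n : ℕ) : ℝ) * ‖C (2 * n)‖ ^ 2) (t / (1 - t)) := by
    simp only [hterm, ← hvalue]
    exact (Real.hasSum_two_mul_multichoose_half_mul_pow ht).mul_left _
  have hodd : HasSum (fun n : ℕ ↦ ((2 * n + 1 : ℕ) : ℝ) * ‖C (2 * n + 1)‖ ^ 2) 0 := by
    simp [hOdd, hasSum_zero]
  simpa only [add_zero] using
    HasSum.even_add_odd (f := fun n : ℕ ↦ (n : ℝ) * ‖C n‖ ^ 2) heven hodd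
end

section
/- Let α, β be complex numbers and let C : ℕ × ℕ → ℂ satisfy the two-mode squeezing recurrences: for all m, n ≥ 0, √(m+1) · C (m+1, n) equals α · √n · C (m, n−1) when n ≥ 1 and equals 0 when n = 0; and √(n+1) · C (m, n+1) equals β · √m · C (m−1, n) when m ≥ 1 and equals 0 when m = 0. Then the diagonal coefficients satisfy C (m, m) = α^m · C (0, 0) for all m ≥ 0, and if C (0, 0) ≠ 0 then necessarily α = β. -/
/-- Diagonal Fock coefficients of a two-mode squeezed state:
`C (m, m) = αᵐ C (0,0)`, and a nontrivial solution forces `α = β`. -/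
theorem two_mode_diagonal_coeffs (α β : ℂ) (C : ℕ × ℕ → ℂ)
    (ha : ∀ m n : ℕ, 1 ≤ n →
      (Real.sqrt (m + 1) : ℂ) * C (m + 1, n) = α * (Real.sqrt n : ℂ) * C (m, n - 1))
    (ha0 : ∀ m : ℕ, (Real.sqrt (m + 1) : ℂ) * C (m + 1, 0) = 0)
    (hb : ∀ m n : ℕ, 1 ≤ m →
      (Real.sqrt (n + 1) : ℂ) * C (m, n + 1) = β * (Real.sqrt m : ℂ) * C (m - 1, n))
    (hb0 : ∀ n : ℕ, (Real.sqrt (n + 1) : ℂ) * C (0, n + 1) = 0) :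
    (∀ m : ℕ, C (m, m) = α ^ m * C (0, 0)) ∧ (C (0, 0) ≠ 0 → α = β) := by
  have hs : ∀ m : ℕ, (Real.sqrt (m + 1) : ℂ) ≠ 0 := by
    intro m
    simp only [ne_eq, Complex.ofReal_eq_zero]
    positivity
  have step : ∀ m : ℕ, C (m + 1, m + 1) = α * C (m, m) := by
    intro m
    have h := ha m (m + 1) (Nat.le_add_left 1 m)
    rw [Nat.add_sub_cancel] at h
    push_cast at h
    apply mul_left_cancel₀ (hs m)
    rw [h]; push_cast; ring
  have diag : ∀ m : ℕ, C (m, m) = α ^ m * C (0, 0) := by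
    intro m
    induction m with
    | zero => simp
    | succ k ih => rw [step k, ih, pow_succ]; ring
  refine ⟨diag, fun h0 => ?_⟩
  have h1 := hb 1 0 le_rfl
  simp only [Nat.cast_zero, Nat.cast_one, zero_add, Real.sqrt_one, Complex.ofReal_one,
    one_mul, mul_one] at h1
  have h2 := diag 1
  simp only [pow_one] at h2
  rw [h2] at h1
  exact mul_right_cancel₀ h0 h1
end

section
/- Let α be a complex number with |α| < 1 and let C : ℕ × ℕ → ℂ satisfy the two-mode squeezing recurrences with parameters α = β (for all m, n ≥ 0: √(m+1) · C (m+1, n) equals α · √n · C (m, n−1) when n ≥ 1 and 0 when n = 0; and √(n+1) · C (m, n+1) equals α · √m · C (m−1, n) when m ≥ 1 and 0 when m = 0), together with the normalization Σ_{m,n} |C (m,n)|² = 1 and the convention that C (0,0) is a positive real number. Then C is uniquely determined: C (m, n) = 0 for m ≠ n and C (m, m) = √(1 − |α|²) · α^m for all m. -/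
/-!
Lowering the first index by the first recurrence shows that `C (m, n)` is a nonzero multiple
of `C (m - k, n - k)`; below the diagonal this reaches `C (j, 0)` with `j ≥ 1`, which vanishes,
and the second recurrence does the same above the diagonal. On the diagonal the recurrence reads
`C (m + 1, m + 1) = α C (m, m)`, so `C (m, m) = αᵐ C (0, 0)`, and the normalization becomes the
geometric series `|C (0, 0)|² / (1 - |α|²) = 1`, which the phase convention solves uniquely.
-/

open Complex

theorem apply_eq_zero_of_snd_lt_fst {R : Type*} [MulZeroClass R] [NoZeroDivisors R]
    {C : ℕ × ℕ → R} (s : ℕ → R) (a : ℕ → ℕ → R)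
    (hs : ∀ m, s m ≠ 0) (h : ∀ m n, 1 ≤ n → s m * C (m + 1, n) = a m n * C (m, n - 1))
    (h0 : ∀ m, s m * C (m + 1, 0) = 0) : ∀ {m n : ℕ}, n < m → C (m, n) = 0
  | m + 1, 0, _ => (mul_eq_zero.1 (h0 m)).resolve_left (hs m)
  | m + 1, n + 1, hnm => by
    have hC := h m (n + 1) n.succ_pos
    rw [Nat.add_sub_cancel, apply_eq_zero_of_snd_lt_fst (m := m) (n := n) s a hs h h0 (by omega),
      mul_zero] at hC
    exact (mul_eq_zero.1 hC).resolve_left (hs m)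

theorem apply_diag_eq_pow_mul {M : Type*} [Monoid M] {C : ℕ × ℕ → M} (α : M)
    (h : ∀ m, C (m + 1, m + 1) = α * C (m, m)) (m : ℕ) : C (m, m) = α ^ m * C (0, 0) := by
  induction m with
  | zero => rw [pow_zero, one_mul]
  | succ m ih => rw [h, ih, pow_succ', mul_assoc]

theorem hasSum_diag_iff_of_apply_eq_zero {ι M : Type*} [AddCommMonoid M] [TopologicalSpace M]
    {f : ι × ι → M} {a : M} (hf : ∀ i j, i ≠ j → f (i, j) = 0) :
    HasSum (fun i => f (i, i)) a ↔ HasSum f a := by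
  refine (Function.Injective.hasSum_iff (f := f) (fun i j hij => (Prod.ext_iff.1 hij).1) ?_)
  rintro ⟨i, j⟩ hij
  exact hf i j fun h => hij ⟨i, by rw [h]⟩

theorem hasSum_norm_mul_pow_sq {𝕜 : Type*} [NormedDivisionRing 𝕜] (z : 𝕜) {c : 𝕜}
    (hc : ‖c‖ < 1) : HasSum (fun m : ℕ => ‖c ^ m * z‖ ^ 2) (‖z‖ ^ 2 * (1 - ‖c‖ ^ 2)⁻¹) := by
  have hc2 : ‖c‖ ^ 2 < 1 := pow_lt_one₀ (norm_nonneg c) hc two_ne_zero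
  have hterm (m : ℕ) : ‖c ^ m * z‖ ^ 2 = ‖z‖ ^ 2 * (‖c‖ ^ 2) ^ m := by
    rw [norm_mul, norm_pow, mul_pow, ← pow_mul, mul_comm m, pow_mul, mul_comm]
  simpa only [hterm] using (hasSum_geometric_of_lt_one (sq_nonneg ‖c‖) hc2).mul_left (‖z‖ ^ 2)

theorem ofReal_sqrt_natCast_add_one_ne_zero (k : ℕ) : ((√(k + 1) : ℝ) : ℂ) ≠ 0 :=
  ofReal_ne_zero.2 (Real.sqrt_pos.2 k.cast_add_one_pos).ne'

/-- Uniqueness of the normalized two-mode squeezed vacuum: the coupled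
recurrences (with `α = β`, `|α| < 1`), normalization and phase convention force
`C (m, n) = 0` for `m ≠ n` and `C (m, m) = √(1-|α|²) αᵐ`. -/
theorem two_mode_squeezed_vacuum_unique (α : ℂ) (hα : ‖α‖ < 1) (C : ℕ × ℕ → ℂ)
    (ha : ∀ m n : ℕ, 1 ≤ n →
      (Real.sqrt (m + 1) : ℂ) * C (m + 1, n) = α * (Real.sqrt n : ℂ) * C (m, n - 1))
    (ha0 : ∀ m : ℕ, (Real.sqrt (m + 1) : ℂ) * C (m + 1, 0) = 0)
    (hb : ∀ m n : ℕ, 1 ≤ m →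
      (Real.sqrt (n + 1) : ℂ) * C (m, n + 1) = α * (Real.sqrt m : ℂ) * C (m - 1, n))
    (hb0 : ∀ n : ℕ, (Real.sqrt (n + 1) : ℂ) * C (0, n + 1) = 0)
    (hnorm : HasSum (fun p : ℕ × ℕ => ‖C p‖ ^ 2) 1)
    (hphase : ∃ r : ℝ, 0 < r ∧ C (0, 0) = (r : ℂ)) :
    (∀ m n : ℕ, m ≠ n → C (m, n) = 0) ∧
    (∀ m : ℕ, C (m, m) = (Real.sqrt (1 - ‖α‖ ^ 2) : ℂ) * α ^ m) := by
  obtain ⟨r, hr, hC₀⟩ := hphase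
  have hs := ofReal_sqrt_natCast_add_one_ne_zero
  -- The second recurrence is the first one for the transposed coefficients `C ∘ Prod.swap`.
  have hoff : ∀ m n : ℕ, m ≠ n → C (m, n) = 0 := fun m n hmn => hmn.lt_or_gt.elim
    (apply_eq_zero_of_snd_lt_fst (C := C ∘ Prod.swap) _ _ hs (fun n m => hb m n) hb0)
    (apply_eq_zero_of_snd_lt_fst _ _ hs ha ha0)
  have hstep : ∀ m, C (m + 1, m + 1) = α * C (m, m) := fun m => by
    have hC := ha m (m + 1) m.succ_pos
    rw [Nat.add_sub_cancel, Nat.cast_add_one, mul_comm α, mul_assoc] at hC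
    exact mul_left_cancel₀ (hs m) hC
  have hdiag : ∀ m, C (m, m) = α ^ m * r := fun m => hC₀ ▸ apply_diag_eq_pow_mul α hstep m
  have hr2 : r ^ 2 = 1 - ‖α‖ ^ 2 := by
    have hdiagSum : HasSum (fun m => ‖C (m, m)‖ ^ 2) (r ^ 2 * (1 - ‖α‖ ^ 2)⁻¹) := by
      simpa only [hdiag, norm_real, Real.norm_of_nonneg hr.le] using
        hasSum_norm_mul_pow_sq (r : ℂ) hα
    have h1 := hnorm.unique ((hasSum_diag_iff_of_apply_eq_zero fun m n hmn => by
      rw [hoff m n hmn, norm_zero, zero_pow two_ne_zero]).1 hdiagSum)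
    have hα2 : ‖α‖ ^ 2 < 1 := pow_lt_one₀ (norm_nonneg α) hα two_ne_zero
    rw [eq_mul_inv_iff_mul_eq₀ (sub_ne_zero.2 hα2.ne')] at h1
    linarith
  refine ⟨hoff, fun m => ?_⟩
  rw [hdiag m, ← hr2, Real.sqrt_sq hr.le, mul_comm]
end

section
/- Let α, β be complex numbers with |α| ≥ 1, and let C : ℕ × ℕ → ℂ satisfy the two-mode squeezing recurrences (for all m, n ≥ 0: √(m+1) · C (m+1, n) equals α · √n · C (m, n−1) when n ≥ 1 and 0 when n = 0; and √(n+1) · C (m, n+1) equals β · √m · C (m−1, n) when m ≥ 1 and 0 when m = 0). If Σ_{m,n} |C (m,n)|² < ∞, then C (m, n) = 0 for all m, n. Hence a nonzero normalizable simultaneous solution of (a − α b†)|ψ⟩ = 0 and (b − β a†)|ψ⟩ = 0 requires |α| < 1. -/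
/-! Off the diagonal the recurrences propagate the boundary zeros `C (m+1, 0) = 0` and
`C (0, n+1) = 0` along lines of constant `m - n`, so `C` vanishes there. On the diagonal the
first recurrence reads `C (n+1, n+1) = α C (n, n)`, so `‖C (n, n)‖ = ‖α‖ⁿ ‖C (0, 0)‖` does not
tend to zero when `|α| ≥ 1` unless `C (0, 0) = 0`, contradicting square-summability. -/

theorem apply_eq_zero_of_snd_lt_fst_s10 {M : Type*} [Zero M] {f : ℕ × ℕ → M}
    (hbdry : ∀ m, f (m + 1, 0) = 0) (hstep : ∀ m n, f (m, n) = 0 → f (m + 1, n + 1) = 0) :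
    ∀ {m n : ℕ}, n < m → f (m, n) = 0
  | m + 1, 0, _ => hbdry m
  | m + 1, n + 1, h => hstep m n (apply_eq_zero_of_snd_lt_fst_s10 hbdry hstep (by omega))

theorem eq_zero_of_pow_mul_summable_norm_sq {𝕜 : Type*} [NormedDivisionRing 𝕜] {α c : 𝕜}
    (hα : 1 ≤ ‖α‖) (hsum : Summable fun n : ℕ => ‖α ^ n * c‖ ^ 2) : c = 0 := by
  have hle : ∀ n : ℕ, ‖c‖ ^ 2 ≤ ‖α ^ n * c‖ ^ 2 := fun n => by
    rw [norm_mul, norm_pow]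
    gcongr
    exact le_mul_of_one_le_left (norm_nonneg c) (one_le_pow₀ hα)
  have hc : ‖c‖ ^ 2 ≤ 0 := ge_of_tendsto' hsum.tendsto_atTop_zero hle
  simpa using hc

theorem eq_zero_of_sqrt_succ_mul_eq_zero {k : ℕ} {z : ℂ} (h : (Real.sqrt (k + 1) : ℂ) * z = 0) :
    z = 0 :=
  (mul_eq_zero.mp h).resolve_left (by norm_cast; positivity)

/-- A nonzero normalizable two-mode squeezed vacuum requires `|α| < 1`:
if `|α| ≥ 1` and `Σ_{m,n} |C (m,n)|²` converges, then `C ≡ 0`. -/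
theorem two_mode_no_normalizable_solution (α β : ℂ) (hα : 1 ≤ ‖α‖)
    (C : ℕ × ℕ → ℂ)
    (ha : ∀ m n : ℕ, 1 ≤ n →
      (Real.sqrt (m + 1) : ℂ) * C (m + 1, n) = α * (Real.sqrt n : ℂ) * C (m, n - 1))
    (ha0 : ∀ m : ℕ, (Real.sqrt (m + 1) : ℂ) * C (m + 1, 0) = 0)
    (hb : ∀ m n : ℕ, 1 ≤ m →
      (Real.sqrt (n + 1) : ℂ) * C (m, n + 1) = β * (Real.sqrt m : ℂ) * C (m - 1, n))
    (hb0 : ∀ n : ℕ, (Real.sqrt (n + 1) : ℂ) * C (0, n + 1) = 0)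
    (hsum : Summable (fun p : ℕ × ℕ => ‖C p‖ ^ 2)) :
    ∀ m n : ℕ, C (m, n) = 0 := by
  have ha' (m n : ℕ) : (Real.sqrt (m + 1) : ℂ) * C (m + 1, n + 1) =
      α * (Real.sqrt (n + 1) : ℂ) * C (m, n) := by exact_mod_cast ha m (n + 1) n.succ_pos
  have hb' (m n : ℕ) : (Real.sqrt (n + 1) : ℂ) * C (m + 1, n + 1) =
      β * (Real.sqrt (m + 1) : ℂ) * C (m, n) := by exact_mod_cast hb (m + 1) n m.succ_pos
  have hbelow : ∀ {m n : ℕ}, n < m → C (m, n) = 0 :=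
    apply_eq_zero_of_snd_lt_fst_s10 (fun m => eq_zero_of_sqrt_succ_mul_eq_zero (ha0 m))
      fun m n h => eq_zero_of_sqrt_succ_mul_eq_zero (by rw [ha' m n, h, mul_zero])
  have habove : ∀ {m n : ℕ}, n < m → C (n, m) = 0 :=
    apply_eq_zero_of_snd_lt_fst_s10 (f := C ∘ Prod.swap)
      (fun n => eq_zero_of_sqrt_succ_mul_eq_zero (hb0 n))
      fun n m (h : C (m, n) = 0) => show C (m + 1, n + 1) = 0 from
        eq_zero_of_sqrt_succ_mul_eq_zero (by rw [hb' m n, h, mul_zero])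
  have hdiag (n : ℕ) : C (n, n) = α ^ n * C (0, 0) := by
    induction n with
    | zero => rw [pow_zero, one_mul]
    | succ n ih =>
      refine mul_left_cancel₀ (by norm_cast; positivity : (Real.sqrt (n + 1) : ℂ) ≠ 0) ?_
      rw [ha', ih, pow_succ]
      ring
  have hC₀ : C (0, 0) = 0 := eq_zero_of_pow_mul_summable_norm_sq hα <|
    (hsum.comp_injective (i := fun n : ℕ => (n, n)) fun _ _ h => congrArg Prod.fst h).congr
      fun n => by rw [Function.comp_apply, hdiag n]
  intro m n
  rcases lt_trichotomy m n with h | rfl | h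
  · exact habove h
  · rw [hdiag, hC₀, mul_zero]
  · exact hbelow h
end

section
/- Fix N ≥ 1, parameters α : Fin N → ℂ, and C : (Fin N → ℕ) → ℂ satisfying the cyclic N-mode squeezing equations: for every i ∈ Fin N (with i+1 taken cyclically) and every occupation vector m : Fin N → ℕ, √(m i + 1) · C (m + eᵢ) equals αᵢ · √(m (i+1)) · C (m − e_{i+1}) when m (i+1) ≥ 1, and equals 0 when m (i+1) = 0, where eⱼ denotes the j-th standard unit vector. Then C (m) = 0 unless m (i) ≤ m (i+1) for every i ∈ Fin N (indices cyclic); consequently C is supported on constant occupation vectors, i.e. C (m) = 0 unless m 1 = m 2 = ⋯ = m N. -/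
/-!
Read the `i`-th equation as a step `m + eᵢ ↦ m - e_{i+1}` along which `C` stays nonzero, and
which is blocked when `m (i+1) = 0`. Starting from a nonzero coefficient with `m (i+1) < m i`,
each step lowers both entries by one, so after `m (i+1)` steps one reaches a nonzero coefficient
with `m (i+1) = 0 < m i`, which the equation forbids. Finally, a cyclically nondecreasing
sequence is constant.
-/

open Fin.NatCast in
theorem Fin.le_apply_add_of_forall_le_add_one {α : Type*} [Preorder α] {N : ℕ} [NeZero N]
    {f : Fin N → α} (h : ∀ i, f i ≤ f (i + 1)) (i : Fin N) (k : ℕ) : f i ≤ f (i + k) := by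
  induction k with
  | zero => simp
  | succ k ih =>
    calc f i ≤ f (i + k) := ih
      _ ≤ f (i + k + 1) := h _
      _ = f (i + ((k + 1 : ℕ) : Fin N)) := by push_cast; rw [add_assoc]

theorem Fin.apply_eq_apply_of_forall_le_add_one {α : Type*} [PartialOrder α] {N : ℕ} [NeZero N]
    {f : Fin N → α} (h : ∀ i, f i ≤ f (i + 1)) (i j : Fin N) : f i = f j := by
  have hle : ∀ i j : Fin N, f i ≤ f j := fun i j => by
    simpa using Fin.le_apply_add_of_forall_le_add_one h i (j - i).val
  exact (hle i j).antisymm (hle j i)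

section Support

variable {ι : Type*} [DecidableEq ι]

theorem Pi.tsub_single_add_single {m : ι → ℕ} {i : ι} (hi : 1 ≤ m i) :
    m - Pi.single i 1 + Pi.single i 1 = m := by
  funext k
  by_cases hk : k = i
  · subst hk; simp only [Pi.add_apply, Pi.sub_apply, Pi.single_eq_same]; omega
  · simp [hk]

theorem apply_le_apply_of_descent {S : (ι → ℕ) → Prop} {i j : ι}
    (hstep : ∀ m : ι → ℕ, S (m + Pi.single i 1) → 1 ≤ m j ∧ S (m - Pi.single j 1)) :
    ∀ m, S m → m i ≤ m j := by
  rcases eq_or_ne i j with rfl | hij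
  · exact fun _ _ => le_rfl
  intro m hm
  induction hn : m j using Nat.strong_induction_on generalizing m with
  | _ n ih =>
    by_contra! hlt
    obtain ⟨hj, hS⟩ :=
      hstep (m - Pi.single i 1) (by rwa [Pi.tsub_single_add_single (by omega)])
    have hj' : 1 ≤ n := by simpa [Pi.single_apply, hij.symm, hn] using hj
    have := ih (n - 1) (by omega) _ hS (by simp [hij.symm, hn])
    simp only [Pi.sub_apply, Pi.single_eq_same, Pi.single_eq_of_ne hij, tsub_zero] at this
    omega

theorem squeezing_descent_step {C : (ι → ℕ) → ℂ} {i j : ι} {a : ℂ}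
    (hrec : ∀ m : ι → ℕ, 1 ≤ m j →
      (Real.sqrt (m i + 1) : ℂ) * C (m + Pi.single i 1) =
        a * (Real.sqrt (m j) : ℂ) * C (m - Pi.single j 1))
    (hrec0 : ∀ m : ι → ℕ, m j = 0 → (Real.sqrt (m i + 1) : ℂ) * C (m + Pi.single i 1) = 0)
    (m : ι → ℕ) (hm : C (m + Pi.single i 1) ≠ 0) :
    1 ≤ m j ∧ C (m - Pi.single j 1) ≠ 0 := by
  have hsqrt : (Real.sqrt (m i + 1) : ℂ) ≠ 0 := by
    exact_mod_cast (Real.sqrt_pos.mpr (by positivity)).ne'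
  have hprod := mul_ne_zero hsqrt hm
  rcases Nat.eq_zero_or_pos (m j) with h0 | hpos
  · exact absurd (hrec0 m h0) hprod
  · refine ⟨hpos, fun hC => hprod ?_⟩
    rw [hrec m hpos, hC, mul_zero]

end Support

theorem cyclic_N_mode_support_general (N : ℕ) [NeZero N] (α : Fin N → ℂ)
    (C : (Fin N → ℕ) → ℂ)
    (hrec : ∀ (i : Fin N) (m : Fin N → ℕ), 1 ≤ m (i + 1) →
      (Real.sqrt (m i + 1) : ℂ) * C (m + Pi.single i 1) =
        α i * (Real.sqrt (m (i + 1)) : ℂ) * C (m - Pi.single (i + 1) 1))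
    (hrec0 : ∀ (i : Fin N) (m : Fin N → ℕ), m (i + 1) = 0 →
      (Real.sqrt (m i + 1) : ℂ) * C (m + Pi.single i 1) = 0) :
    (∀ m : Fin N → ℕ, C m ≠ 0 → ∀ i : Fin N, m i ≤ m (i + 1)) ∧
    (∀ m : Fin N → ℕ, C m ≠ 0 → ∀ i j : Fin N, m i = m j) := by
  have hmono : ∀ m : Fin N → ℕ, C m ≠ 0 → ∀ i : Fin N, m i ≤ m (i + 1) := fun m hm i =>
    apply_le_apply_of_descent (S := fun m => C m ≠ 0)
      (squeezing_descent_step (hrec i) (hrec0 i)) m hm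
  exact ⟨hmono, fun m hm => Fin.apply_eq_apply_of_forall_le_add_one (hmono m hm)⟩

/-- Support of a cyclic N-mode squeezed state: the cyclic coupling conditions
force `C m = 0` unless `m i ≤ m (i+1)` for every `i` (cyclically); consequently
`C` is supported on constant occupation vectors. -/
theorem cyclic_N_mode_support (N : ℕ) [NeZero N] (hN : 1 ≤ N) (α : Fin N → ℂ)
    (C : (Fin N → ℕ) → ℂ)
    (hrec : ∀ (i : Fin N) (m : Fin N → ℕ), 1 ≤ m (i + 1) →
      (Real.sqrt (m i + 1) : ℂ) * C (m + Pi.single i 1) =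
        α i * (Real.sqrt (m (i + 1)) : ℂ) * C (m - Pi.single (i + 1) 1))
    (hrec0 : ∀ (i : Fin N) (m : Fin N → ℕ), m (i + 1) = 0 →
      (Real.sqrt (m i + 1) : ℂ) * C (m + Pi.single i 1) = 0) :
    (∀ m : Fin N → ℕ, C m ≠ 0 → ∀ i : Fin N, m i ≤ m (i + 1)) ∧
    (∀ m : Fin N → ℕ, C m ≠ 0 → ∀ i j : Fin N, m i = m j) :=
  cyclic_N_mode_support_general N α C hrec hrec0
end
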